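/- Let (f_n)_{n≥1} be a sequence of nonconstant holomorphic self-maps of the unit disk 𝔻 with f_n(0) = 0 for every n, and suppose the forward iterates F_n := f_n ∘ ⋯ ∘ f_1 converge locally uniformly on 𝔻 to a holomorphic self-map F of 𝔻. Then F is nonconstant if and only if Σ_{n≥1} (1 − |f_n′(0)|) < ∞. -/

import Mathlib

/-!
For a holomorphic self-map `h` of the disk with `h 0 = 0`, put `a = ‖h'(0)‖` and `t = ‖z‖`.
Schwarz–Pick applied to `h z / z` gives `t (a - t) / (1 - a t) ≤ ‖h z‖ ≤ t (a + t) / (1 + a t)`,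
so along an orbit `F n z` each step multiplies the modulus by `1 - Θ(1 - ‖f_n'(0)‖)`, with
constants depending only on the (decreasing) modulus.
If the series diverges, the upper bound drives every orbit to `0`, so the limit is constant.
If it converges, pick `N` with a small tail and a point where `F_N` is small but nonzero (`F_N` is
nonconstant by the open mapping theorem); the lower bound keeps that orbit away from `0`, while
the orbit of `0` stays at `0`.
-/

open Filter Metric Set

noncomputable section

/-- The open unit disk in the complex plane. -/
def unitDisk : Set ℂ := Metric.ball (0 : ℂ) 1

/-- A holomorphic self-map of the unit disk. -/
def IsHolSelfMap (f : ℂ → ℂ) : Prop :=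
  DifferentiableOn ℂ f unitDisk ∧ Set.MapsTo f unitDisk unitDisk

open Topology ComplexConjugate

lemma mem_unitDisk {z : ℂ} : z ∈ unitDisk ↔ ‖z‖ < 1 := mem_ball_zero_iff

lemma zero_mem_unitDisk : (0 : ℂ) ∈ unitDisk := mem_ball_self one_pos

lemma isOpen_unitDisk : IsOpen unitDisk := isOpen_ball

lemma isPreconnected_unitDisk : IsPreconnected unitDisk := (convex_ball _ _).isPreconnected

lemma Complex.normSq_one_sub_conj_mul_sub_normSq_sub (p q : ℂ) :
    normSq (1 - conj p * q) - normSq (p - q) = (1 - normSq p) * (1 - normSq q) := by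
  simp only [Complex.normSq_apply, Complex.sub_re, Complex.sub_im, Complex.mul_re,
    Complex.mul_im, Complex.conj_re, Complex.conj_im, Complex.one_re, Complex.one_im]
  ring

lemma Complex.norm_sub_lt_norm_one_sub_conj_mul {p q : ℂ} (hp : ‖p‖ < 1) (hq : ‖q‖ < 1) :
    ‖p - q‖ < ‖1 - conj p * q‖ := by
  refine lt_of_pow_lt_pow_left₀ 2 (norm_nonneg _) ?_
  have hp' : normSq p < 1 := by rw [← Complex.sq_norm]; nlinarith [norm_nonneg p]
  have hq' : normSq q < 1 := by rw [← Complex.sq_norm]; nlinarith [norm_nonneg q]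
  rw [Complex.sq_norm, Complex.sq_norm, ← sub_pos, normSq_one_sub_conj_mul_sub_normSq_sub]
  exact mul_pos (sub_pos.2 hp') (sub_pos.2 hq')

/-- Schwarz's lemma applied to `g` followed by the disk automorphism exchanging `g 0` and `0`. -/
lemma IsHolSelfMap.norm_sub_le_mul_norm_one_sub_conj_mul {g : ℂ → ℂ} (hg : IsHolSelfMap g) {z : ℂ}
    (hz : z ∈ unitDisk) : ‖g 0 - g z‖ ≤ ‖z‖ * ‖1 - conj (g 0) * g z‖ := by
  have hg1 : ∀ w ∈ unitDisk, ‖g w‖ < 1 := fun w hw => mem_unitDisk.1 (hg.2 hw)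
  have hlt : ∀ w ∈ unitDisk, ‖g 0 - g w‖ < ‖1 - conj (g 0) * g w‖ := fun w hw =>
    Complex.norm_sub_lt_norm_one_sub_conj_mul (hg1 0 zero_mem_unitDisk) (hg1 w hw)
  have hden : ∀ w ∈ unitDisk, 1 - conj (g 0) * g w ≠ 0 := fun w hw =>
    norm_pos_iff.1 ((norm_nonneg _).trans_lt (hlt w hw))
  set k : ℂ → ℂ := fun w => (g 0 - g w) / (1 - conj (g 0) * g w)
  have hk : DifferentiableOn ℂ k unitDisk :=
    ((differentiableOn_const _).sub hg.1).div
      ((differentiableOn_const _).sub ((differentiableOn_const _).mul hg.1)) hden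
  have hkmaps : MapsTo k unitDisk (closedBall 0 1) := fun w hw => by
    rw [mem_closedBall_zero_iff, norm_div, div_le_one (norm_pos_iff.2 (hden w hw))]
    exact (hlt w hw).le
  have hkz : ‖k z‖ ≤ ‖z‖ :=
    Complex.norm_le_norm_of_mapsTo_ball hk hkmaps (by simp [k]) (mem_unitDisk.1 hz)
  calc ‖g 0 - g z‖ = ‖k z‖ * ‖1 - conj (g 0) * g z‖ := by
        rw [← norm_mul, div_mul_cancel₀ _ (hden z hz)]
    _ ≤ ‖z‖ * ‖1 - conj (g 0) * g z‖ := by gcongr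

lemma isHolSelfMap_or_eqOn_const {g : ℂ → ℂ} (hd : DifferentiableOn ℂ g unitDisk)
    (hm : MapsTo g unitDisk (closedBall 0 1)) :
    IsHolSelfMap g ∨ ∃ c, EqOn g (fun _ => c) unitDisk := by
  by_cases h : ∃ w₀ ∈ unitDisk, 1 ≤ ‖g w₀‖
  · obtain ⟨w₀, hw₀, hge⟩ := h
    refine Or.inr ⟨g w₀, Complex.eqOn_of_isPreconnected_of_isMaxOn_norm isPreconnected_unitDisk
      isOpen_unitDisk hd hw₀ fun w hw => ?_⟩
    exact (mem_closedBall_zero_iff.1 (hm hw)).trans hge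
  · push Not at h
    exact Or.inl ⟨hd, fun w hw => mem_unitDisk.2 (h w hw)⟩

lemma abs_norm_sub_norm_le_of_norm_sub_le {p q : ℂ} {t : ℝ} (hp : ‖p‖ ≤ 1) (hq : ‖q‖ ≤ 1)
    (ht₀ : 0 ≤ t) (ht₁ : t ≤ 1) (h : ‖p - q‖ ≤ t * ‖1 - conj p * q‖) :
    |‖p‖ - ‖q‖| ≤ t * (1 - ‖p‖ * ‖q‖) := by
  set x := (p * conj q).re
  have hx : x ≤ ‖p‖ * ‖q‖ :=
    (Complex.re_le_norm _).trans_eq (by rw [norm_mul, Complex.norm_conj])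
  have hsub : ‖p - q‖ ^ 2 = ‖p‖ ^ 2 + ‖q‖ ^ 2 - 2 * x := by
    simp only [Complex.sq_norm, Complex.normSq_sub, x]
  have hone : ‖1 - conj p * q‖ ^ 2 = 1 + ‖p‖ ^ 2 * ‖q‖ ^ 2 - 2 * x := by
    rw [Complex.sq_norm, Complex.sq_norm, Complex.sq_norm, Complex.normSq_sub]
    simp [x, Complex.normSq_mul, Complex.mul_re, Complex.conj_re, Complex.conj_im]
  have hsq : ‖p - q‖ ^ 2 ≤ t ^ 2 * ‖1 - conj p * q‖ ^ 2 := by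
    rw [← mul_pow]; exact pow_le_pow_left₀ (norm_nonneg _) h 2
  refine abs_le_of_sq_le_sq ?_ (mul_nonneg ht₀ (by nlinarith [norm_nonneg p, norm_nonneg q]))
  rw [hsub, hone] at hsq
  nlinarith [mul_nonneg (sub_nonneg.2 hx) (sub_nonneg.2 (pow_le_one₀ ht₀ ht₁ : t ^ 2 ≤ 1))]

lemma abs_norm_sub_norm_le_of_mapsTo_closedBall {g : ℂ → ℂ} (hd : DifferentiableOn ℂ g unitDisk)
    (hm : MapsTo g unitDisk (closedBall 0 1)) {z : ℂ} (hz : z ∈ unitDisk) :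
    |‖g 0‖ - ‖g z‖| ≤ ‖z‖ * (1 - ‖g 0‖ * ‖g z‖) := by
  have hg1 : ∀ w ∈ unitDisk, ‖g w‖ ≤ 1 := fun w hw => mem_closedBall_zero_iff.1 (hm hw)
  rcases isHolSelfMap_or_eqOn_const hd hm with hg | ⟨c, hc⟩
  · exact abs_norm_sub_norm_le_of_norm_sub_le (hg1 0 zero_mem_unitDisk) (hg1 z hz)
      (norm_nonneg z) (mem_unitDisk.1 hz).le (hg.norm_sub_le_mul_norm_one_sub_conj_mul hz)
  · have hc1 : ‖c‖ ≤ 1 := by simpa [hc zero_mem_unitDisk] using hg1 0 zero_mem_unitDisk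
    rw [hc zero_mem_unitDisk, hc hz, sub_self, abs_zero]
    exact mul_nonneg (norm_nonneg z) (by nlinarith [norm_nonneg c])

section FixingOrigin

variable {h : ℂ → ℂ}

lemma IsHolSelfMap.mapsTo_closedBall (hh : IsHolSelfMap h) : MapsTo h unitDisk (closedBall 0 1) :=
  hh.2.mono_right ball_subset_closedBall

lemma IsHolSelfMap.norm_apply_le_norm (hh : IsHolSelfMap h) (h0 : h 0 = 0) {z : ℂ}
    (hz : z ∈ unitDisk) : ‖h z‖ ≤ ‖z‖ :=
  Complex.norm_le_norm_of_mapsTo_ball hh.1 hh.mapsTo_closedBall h0 (mem_unitDisk.1 hz)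

lemma norm_eq_norm_mul_norm_dslope (h0 : h 0 = 0) (z : ℂ) : ‖h z‖ = ‖z‖ * ‖dslope h 0 z‖ := by
  have hz := sub_smul_dslope h 0 z
  rw [sub_zero, h0, sub_zero, smul_eq_mul] at hz
  rw [← hz, norm_mul]

lemma IsHolSelfMap.mapsTo_closedBall_dslope (hh : IsHolSelfMap h) (h0 : h 0 = 0) :
    MapsTo (dslope h 0) unitDisk (closedBall 0 1) := fun w hw => by
  rw [mem_closedBall_zero_iff]
  have hm : MapsTo h unitDisk (closedBall (h 0) 1) := by rw [h0]; exact hh.mapsTo_closedBall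
  simpa using Complex.norm_dslope_le_div_of_mapsTo_ball hh.1 hm hw

lemma IsHolSelfMap.abs_norm_deriv_sub_norm_dslope_le (hh : IsHolSelfMap h) (h0 : h 0 = 0)
    {z : ℂ} (hz : z ∈ unitDisk) :
    |‖deriv h 0‖ - ‖dslope h 0 z‖| ≤ ‖z‖ * (1 - ‖deriv h 0‖ * ‖dslope h 0 z‖) := by
  have hd : DifferentiableOn ℂ (dslope h 0) unitDisk :=
    (Complex.differentiableOn_dslope (isOpen_unitDisk.mem_nhds zero_mem_unitDisk)).2 hh.1
  simpa only [dslope_same] using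
    abs_norm_sub_norm_le_of_mapsTo_closedBall hd (hh.mapsTo_closedBall_dslope h0) hz

lemma IsHolSelfMap.norm_deriv_le_one (hh : IsHolSelfMap h) (h0 : h 0 = 0) : ‖deriv h 0‖ ≤ 1 := by
  simpa using hh.mapsTo_closedBall_dslope h0 zero_mem_unitDisk

lemma IsHolSelfMap.norm_apply_le_mul (hh : IsHolSelfMap h) (h0 : h 0 = 0) {z : ℂ}
    (hz : z ∈ unitDisk) : ‖h z‖ ≤ ‖z‖ * (1 - (1 - ‖z‖) * (1 - ‖deriv h 0‖) / 2) := by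
  set a := ‖deriv h 0‖
  set u := ‖dslope h 0 z‖
  set t := ‖z‖
  have hsp : u * (1 + a * t) ≤ a + t := by
    nlinarith [(abs_le.1 (hh.abs_norm_deriv_sub_norm_dslope_le h0 hz)).1]
  have ht : t < 1 := mem_unitDisk.1 hz
  have ha : a ≤ 1 := hh.norm_deriv_le_one h0
  have hpos : 0 < 1 + a * t := by positivity
  rw [norm_eq_norm_mul_norm_dslope h0]
  refine mul_le_mul_of_nonneg_left (le_of_mul_le_mul_right (hsp.trans ?_) hpos) (norm_nonneg z)
  -- the slack is `(1 - a) * (1 - t) * (1 - a * t) / 2`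
  nlinarith [mul_nonneg (mul_nonneg (sub_nonneg.2 ha) (sub_nonneg.2 ht.le))
    (sub_nonneg.2 (mul_le_one₀ ha (norm_nonneg z) ht.le))]

lemma IsHolSelfMap.mul_le_norm_apply (hh : IsHolSelfMap h) (h0 : h 0 = 0) {z : ℂ}
    (hz : z ∈ unitDisk) : ‖z‖ * (1 - (1 + ‖z‖) / (1 - ‖z‖) * (1 - ‖deriv h 0‖)) ≤ ‖h z‖ := by
  set a := ‖deriv h 0‖
  set u := ‖dslope h 0 z‖
  set t := ‖z‖
  have hsp := (abs_le.1 (hh.abs_norm_deriv_sub_norm_dslope_le h0 hz)).2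
  have ht : 0 < 1 - t := sub_pos.2 (mem_unitDisk.1 hz)
  have ha : a ≤ 1 := hh.norm_deriv_le_one h0
  have hu : u ≤ 1 := mem_closedBall_zero_iff.1 (hh.mapsTo_closedBall_dslope h0 hz)
  rw [norm_eq_norm_mul_norm_dslope h0]
  refine mul_le_mul_of_nonneg_left ?_ (norm_nonneg z)
  rw [div_mul_eq_mul_div, sub_le_comm, le_div_iff₀ ht]
  nlinarith [mul_nonneg (mul_nonneg (norm_nonneg z) (sub_nonneg.2 ha)) (sub_nonneg.2 hu)]

end FixingOrigin

lemma tendsto_zero_of_le_mul_one_sub {x b : ℕ → ℝ} {c : ℝ} (hc : 0 < c) (hb : ∀ n, 0 ≤ b n)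
    (hbs : ¬Summable b) (hx : ∀ n, 0 ≤ x n) (hstep : ∀ n, x (n + 1) ≤ x n * (1 - c * b n)) :
    Tendsto x atTop (𝓝 0) := by
  have hexp : ∀ n, x n ≤ x 0 * Real.exp (-(c * ∑ k ∈ Finset.range n, b k)) := by
    intro n
    induction n with
    | zero => simp
    | succ n ih =>
      calc x (n + 1) ≤ x n * Real.exp (-(c * b n)) :=
            (hstep n).trans (mul_le_mul_of_nonneg_left (Real.one_sub_le_exp_neg _) (hx n))
        _ ≤ x 0 * Real.exp (-(c * ∑ k ∈ Finset.range n, b k)) * Real.exp (-(c * b n)) :=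
            mul_le_mul_of_nonneg_right ih (Real.exp_pos _).le
        _ = x 0 * Real.exp (-(c * ∑ k ∈ Finset.range (n + 1), b k)) := by
            rw [Finset.sum_range_succ, mul_assoc, ← Real.exp_add, mul_add, neg_add]
  have hsum : Tendsto (fun n => c * ∑ k ∈ Finset.range n, b k) atTop atTop :=
    ((not_summable_iff_tendsto_nat_atTop_of_nonneg hb).1 hbs).const_mul_atTop hc
  have hlim := (Real.tendsto_exp_neg_atTop_nhds_zero.comp hsum).const_mul (x 0)
  rw [mul_zero] at hlim
  exact squeeze_zero hx hexp hlim

lemma mul_one_sub_sum_le {x b : ℕ → ℝ} (hx : 0 ≤ x 0) (hb₀ : ∀ n, 0 ≤ b n) (hb₁ : ∀ n, b n ≤ 1)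
    (hstep : ∀ n, x n * (1 - b n) ≤ x (n + 1)) (n : ℕ) :
    x 0 * (1 - ∑ k ∈ Finset.range n, b k) ≤ x n := by
  induction n with
  | zero => simp
  | succ n ih =>
    have hS : 0 ≤ ∑ k ∈ Finset.range n, b k := Finset.sum_nonneg fun k _ => hb₀ k
    rw [Finset.sum_range_succ]
    calc x 0 * (1 - (∑ k ∈ Finset.range n, b k + b n))
        ≤ x 0 * (1 - ∑ k ∈ Finset.range n, b k) * (1 - b n) := by
          nlinarith [mul_nonneg (mul_nonneg hx hS) (hb₀ n)]
      _ ≤ x n * (1 - b n) := mul_le_mul_of_nonneg_right ih (sub_nonneg.2 (hb₁ n))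
      _ ≤ x (n + 1) := hstep n

lemma IsHolSelfMap.comp {g h : ℂ → ℂ} (hh : IsHolSelfMap h) (hg : IsHolSelfMap g) :
    IsHolSelfMap (h ∘ g) :=
  ⟨hh.1.comp hg.1 hg.2, hh.2.comp hg.2⟩

/-- Open mapping theorem: `g` maps the disk onto an open set, on which `h` would be constant. -/
lemma IsHolSelfMap.exists_comp_ne {g h : ℂ → ℂ} (hg : IsHolSelfMap g)
    (hh : DifferentiableOn ℂ h unitDisk) (hg' : ∃ z ∈ unitDisk, ∃ w ∈ unitDisk, g z ≠ g w)
    (hh' : ∃ z ∈ unitDisk, ∃ w ∈ unitDisk, h z ≠ h w) :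
    ∃ z ∈ unitDisk, ∃ w ∈ unitDisk, h (g z) ≠ h (g w) := by
  obtain ⟨z, hz, w, hw, hne⟩ := hh'
  by_contra! hconst
  rcases (hg.1.analyticOnNhd isOpen_unitDisk).is_constant_or_isOpen isPreconnected_unitDisk with
    ⟨c, hc⟩ | hopen
  · obtain ⟨z', hz', w', hw', hne'⟩ := hg'
    exact hne' ((hc z' hz').trans (hc w' hw').symm)
  have himage : g '' unitDisk ∈ 𝓝 (g 0) :=
    (hopen _ subset_rfl isOpen_unitDisk).mem_nhds (mem_image_of_mem g zero_mem_unitDisk)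
  have hloc : h =ᶠ[𝓝 (g 0)] fun _ => h (g 0) := by
    filter_upwards [himage]
    rintro _ ⟨v, hv, rfl⟩
    exact hconst v hv 0 zero_mem_unitDisk
  have heq := (hh.analyticOnNhd isOpen_unitDisk).eqOn_of_preconnected_of_eventuallyEq
    analyticOnNhd_const isPreconnected_unitDisk (hg.2 zero_mem_unitDisk) hloc
  exact hne ((heq hz).trans (heq hw).symm)

/-- By the identity theorem a nonconstant `G` does not vanish near `0`. -/
lemma exists_norm_pos_le_of_ne {G : ℂ → ℂ} (hG : DifferentiableOn ℂ G unitDisk) (hG0 : G 0 = 0)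
    (hne : ∃ z ∈ unitDisk, ∃ w ∈ unitDisk, G z ≠ G w) {ε : ℝ} (hε : 0 < ε) :
    ∃ z ∈ unitDisk, 0 < ‖G z‖ ∧ ‖G z‖ ≤ ε := by
  have hnonzero : ∃ᶠ z in 𝓝 0, G z ≠ 0 := by
    refine Filter.not_eventually.1 fun hzero => ?_
    obtain ⟨z, hz, w, hw, hzw⟩ := hne
    have heq := (hG.analyticOnNhd isOpen_unitDisk).eqOn_of_preconnected_of_eventuallyEq
      analyticOnNhd_const isPreconnected_unitDisk zero_mem_unitDisk hzero
    exact hzw ((heq hz).trans (heq hw).symm)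
  have hsmall : ∀ᶠ z in 𝓝 0, z ∈ unitDisk ∧ ‖G z‖ ≤ ε := by
    have hcont := (hG.continuousOn.continuousAt (isOpen_unitDisk.mem_nhds zero_mem_unitDisk))
    rw [ContinuousAt, hG0] at hcont
    exact Filter.Eventually.and (isOpen_unitDisk.mem_nhds zero_mem_unitDisk)
      (hcont.norm.eventually (Iic_mem_nhds (by simpa using hε)))
  obtain ⟨z, ⟨hz, hle⟩, hGz⟩ := (hsmall.and_frequently hnonzero).exists
  exact ⟨z, hz, norm_pos_iff.2 hGz, hle⟩

section Iterates

variable {f F : ℕ → ℂ → ℂ}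

lemma isHolSelfMap_iterate (hf : ∀ n : ℕ, IsHolSelfMap (f (n + 1))) (hF0 : ∀ z, F 0 z = z)
    (hFrec : ∀ n z, F (n + 1) z = f (n + 1) (F n z)) (n : ℕ) : IsHolSelfMap (F n) := by
  induction n with
  | zero =>
    rw [funext hF0]
    exact ⟨differentiableOn_id, mapsTo_id _⟩
  | succ n ih =>
    rw [funext (hFrec n)]
    exact (hf n).comp ih

lemma iterate_apply_zero (hfix : ∀ n : ℕ, f (n + 1) 0 = 0) (hF0 : ∀ z, F 0 z = z)
    (hFrec : ∀ n z, F (n + 1) z = f (n + 1) (F n z)) (n : ℕ) : F n 0 = 0 := by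
  induction n with
  | zero => exact hF0 0
  | succ n ih => rw [hFrec, ih, hfix]

lemma exists_iterate_ne (hf : ∀ n : ℕ, IsHolSelfMap (f (n + 1)))
    (hfnc : ∀ n : ℕ, ∃ z ∈ unitDisk, ∃ w ∈ unitDisk, f (n + 1) z ≠ f (n + 1) w)
    (hF0 : ∀ z, F 0 z = z) (hFrec : ∀ n z, F (n + 1) z = f (n + 1) (F n z)) (n : ℕ) :
    ∃ z ∈ unitDisk, ∃ w ∈ unitDisk, F n z ≠ F n w := by
  induction n with
  | zero =>
    refine ⟨0, zero_mem_unitDisk, 1 / 2, mem_unitDisk.2 (by norm_num), ?_⟩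
    rw [hF0, hF0]
    norm_num
  | succ n ih =>
    simp only [hFrec]
    exact (isHolSelfMap_iterate hf hF0 hFrec n).exists_comp_ne (hf n).1 ih (hfnc n)

lemma tendsto_iterate_zero_of_not_summable (hf : ∀ n : ℕ, IsHolSelfMap (f (n + 1)))
    (hfix : ∀ n : ℕ, f (n + 1) 0 = 0) (hF0 : ∀ z, F 0 z = z)
    (hFrec : ∀ n z, F (n + 1) z = f (n + 1) (F n z))
    (hbs : ¬Summable fun n : ℕ => 1 - ‖deriv (f (n + 1)) 0‖) {z : ℂ} (hz : z ∈ unitDisk) :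
    Tendsto (fun n => F n z) atTop (𝓝 0) := by
  have hFn := isHolSelfMap_iterate hf hF0 hFrec
  have hFz : ∀ n, ‖F n z‖ ≤ ‖z‖ := fun n =>
    (hFn n).norm_apply_le_norm (iterate_apply_zero hfix hF0 hFrec n) hz
  refine tendsto_zero_iff_norm_tendsto_zero.2 (tendsto_zero_of_le_mul_one_sub
    (c := (1 - ‖z‖) / 2) (by linarith [mem_unitDisk.1 hz])
    (fun n => sub_nonneg.2 ((hf n).norm_deriv_le_one (hfix n))) hbs (fun n => norm_nonneg _)
    fun n => ?_)
  rw [hFrec]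
  refine ((hf n).norm_apply_le_mul (hfix n) ((hFn n).2 hz)).trans ?_
  have hb := sub_nonneg.2 ((hf n).norm_deriv_le_one (hfix n))
  exact mul_le_mul_of_nonneg_left (by nlinarith [hFz n]) (norm_nonneg _)

/-- While the orbit stays in the disk of radius `1 / 2`, each step multiplies the modulus by at
least `1 - 3 (1 - ‖f'(0)‖)`; a tail sum below `1 / 6` keeps the product above `1 / 2`. -/
lemma half_norm_le_norm_iterate_add (hf : ∀ n : ℕ, IsHolSelfMap (f (n + 1)))
    (hfix : ∀ n : ℕ, f (n + 1) 0 = 0) (hF0 : ∀ z, F 0 z = z)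
    (hFrec : ∀ n z, F (n + 1) z = f (n + 1) (F n z))
    (hs : Summable fun n : ℕ => 1 - ‖deriv (f (n + 1)) 0‖) {N : ℕ}
    (htail : ∑' k, (1 - ‖deriv (f (k + N + 1)) 0‖) < 1 / 6) {z : ℂ} (hz : z ∈ unitDisk)
    (hzN : ‖F N z‖ ≤ 1 / 2) (m : ℕ) : ‖F N z‖ / 2 ≤ ‖F (m + N) z‖ := by
  set b : ℕ → ℝ := fun k => 1 - ‖deriv (f (k + N + 1)) 0‖
  have hFn := isHolSelfMap_iterate hf hF0 hFrec
  have hb₀ : ∀ k, 0 ≤ b k := fun k => sub_nonneg.2 ((hf _).norm_deriv_le_one (hfix _))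
  have hbs : Summable b := (summable_nat_add_iff N).2 hs
  have hsum : ∀ m, ∑ k ∈ Finset.range m, b k < 1 / 6 := fun m =>
    (hbs.sum_le_tsum _ fun k _ => hb₀ k).trans_lt htail
  have hbk : ∀ k, b k < 1 / 6 := fun k => (hbs.le_tsum k fun j _ => hb₀ j).trans_lt htail
  have horbit : ∀ k, ‖F (k + N) z‖ ≤ 1 / 2 := by
    intro k
    induction k with
    | zero => simpa using hzN
    | succ k ih =>
      rw [Nat.add_right_comm, hFrec]
      exact ((hf _).norm_apply_le_norm (hfix _) ((hFn _).2 hz)).trans ih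
  have hstep : ∀ k, ‖F (k + N) z‖ * (1 - 3 * b k) ≤ ‖F (k + 1 + N) z‖ := by
    intro k
    rw [Nat.add_right_comm, hFrec]
    refine le_trans ?_ ((hf _).mul_le_norm_apply (hfix _) ((hFn _).2 hz))
    have hratio : (1 + ‖F (k + N) z‖) / (1 - ‖F (k + N) z‖) ≤ 3 := by
      rw [div_le_iff₀ (by linarith [horbit k])]
      linarith [horbit k]
    gcongr
    exact hb₀ k
  have hlower := mul_one_sub_sum_le (x := fun k => ‖F (k + N) z‖) (norm_nonneg _)
    (fun k => by linarith [hb₀ k]) (fun k => by linarith [hbk k]) hstep m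
  rw [← Finset.mul_sum] at hlower
  simp only [zero_add] at hlower
  nlinarith [hsum m, norm_nonneg (F N z)]

lemma exists_forall_le_norm_iterate_of_summable (hf : ∀ n : ℕ, IsHolSelfMap (f (n + 1)))
    (hfnc : ∀ n : ℕ, ∃ z ∈ unitDisk, ∃ w ∈ unitDisk, f (n + 1) z ≠ f (n + 1) w)
    (hfix : ∀ n : ℕ, f (n + 1) 0 = 0) (hF0 : ∀ z, F 0 z = z)
    (hFrec : ∀ n z, F (n + 1) z = f (n + 1) (F n z))
    (hs : Summable fun n : ℕ => 1 - ‖deriv (f (n + 1)) 0‖) :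
    ∃ z ∈ unitDisk, ∃ δ > 0, ∀ᶠ n in atTop, δ ≤ ‖F n z‖ := by
  obtain ⟨N, htail⟩ := ((tendsto_sum_nat_add fun n : ℕ => 1 - ‖deriv (f (n + 1)) 0‖).eventually
    (gt_mem_nhds (by norm_num : (0 : ℝ) < 1 / 6))).exists
  obtain ⟨z, hz, hpos, hle⟩ := exists_norm_pos_le_of_ne (isHolSelfMap_iterate hf hF0 hFrec N).1
    (iterate_apply_zero hfix hF0 hFrec N) (exists_iterate_ne hf hfnc hF0 hFrec N)
    (by norm_num : (0 : ℝ) < 1 / 2)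
  refine ⟨z, hz, ‖F N z‖ / 2, half_pos hpos, eventually_atTop.2 ⟨N, fun n hn => ?_⟩⟩
  rw [← Nat.sub_add_cancel hn]
  exact half_norm_le_norm_iterate_add hf hfix hF0 hFrec hs htail hz hle (n - N)

end Iterates

theorem stmt_2_general
    (f F : ℕ → ℂ → ℂ) (Flim : ℂ → ℂ)
    (hf : ∀ n : ℕ, IsHolSelfMap (f (n + 1)))
    (hfnc : ∀ n : ℕ, ∃ z ∈ unitDisk, ∃ w ∈ unitDisk, f (n + 1) z ≠ f (n + 1) w)
    (hfix : ∀ n : ℕ, f (n + 1) 0 = 0)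
    (hF0 : ∀ z, F 0 z = z)
    (hFrec : ∀ n z, F (n + 1) z = f (n + 1) (F n z))
    (hconv : TendstoLocallyUniformlyOn F Flim atTop unitDisk) :
    (∃ z ∈ unitDisk, ∃ w ∈ unitDisk, Flim z ≠ Flim w) ↔
      Summable (fun n : ℕ => 1 - ‖deriv (f (n + 1)) 0‖) := by
  have hlim : ∀ z ∈ unitDisk, Tendsto (fun n => F n z) atTop (𝓝 (Flim z)) :=
    fun z hz => hconv.tendsto_at hz
  constructor
  · rintro ⟨z, hz, w, hw, hzw⟩
    by_contra hbs
    have hzero : ∀ v ∈ unitDisk, Flim v = 0 := fun v hv => tendsto_nhds_unique (hlim v hv)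
      (tendsto_iterate_zero_of_not_summable hf hfix hF0 hFrec hbs hv)
    exact hzw ((hzero z hz).trans (hzero w hw).symm)
  · intro hs
    obtain ⟨z, hz, δ, hδ, hle⟩ := exists_forall_le_norm_iterate_of_summable hf hfnc hfix hF0 hFrec hs
    have hFlim0 : Flim 0 = 0 := tendsto_nhds_unique (hlim 0 zero_mem_unitDisk)
      (by simp only [iterate_apply_zero hfix hF0 hFrec, tendsto_const_nhds])
    refine ⟨z, hz, 0, zero_mem_unitDisk, fun hzero => ?_⟩
    have hδle : δ ≤ ‖Flim z‖ := ge_of_tendsto (hlim z hz).norm hle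
    rw [hzero, hFlim0, norm_zero] at hδle
    exact hδ.not_ge hδle

/-- If `(f n)` are nonconstant holomorphic self-maps of the unit disk
fixing the origin, whose forward iterates converge locally uniformly to a holomorphic
self-map `Flim`, then `Flim` is nonconstant iff `∑ (1 - |f n′(0)|) < ∞`. -/
theorem stmt_2
    (f F : ℕ → ℂ → ℂ) (Flim : ℂ → ℂ)
    (hf : ∀ n : ℕ, IsHolSelfMap (f (n + 1)))
    (hfnc : ∀ n : ℕ, ∃ z ∈ unitDisk, ∃ w ∈ unitDisk, f (n + 1) z ≠ f (n + 1) w)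
    (hfix : ∀ n : ℕ, f (n + 1) 0 = 0)
    (hF0 : ∀ z, F 0 z = z)
    (hFrec : ∀ n z, F (n + 1) z = f (n + 1) (F n z))
    (hFlim : IsHolSelfMap Flim)
    (hconv : TendstoLocallyUniformlyOn F Flim atTop unitDisk) :
    (∃ z ∈ unitDisk, ∃ w ∈ unitDisk, Flim z ≠ Flim w) ↔
      Summable (fun n : ℕ => 1 - ‖deriv (f (n + 1)) 0‖) :=
  stmt_2_general f F Flim hf hfnc hfix hF0 hFrec hconv
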